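/- Let R be a po-ring and let A be a po-coherent partially ordered right R-module. Then the intersection of any two finitely generated R-submodules of A is a finitely generated R-submodule, and the intersection of any two finitely generated R⁺-subsemimodules of A is a finitely generated R⁺-subsemimodule. -/

import Mathlib

/-- A *po-ring*: a ring equipped with a partial order such that addition is
translation-invariant, multiplication by nonnegative elements (on either side) is monotone,
the ring is directed (every element is a difference of two nonnegative elements),
and `0 ≤ 1`. -/
class PORing (R : Type*) extends Ring R, PartialOrder R where
  add_le_add_right' : ∀ a b : R, a ≤ b → ∀ c : R, a + c ≤ b + c
  mul_le_mul_of_nonneg_right' : ∀ a b c : R, a ≤ b → 0 ≤ c → a * c ≤ b * c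
  mul_le_mul_of_nonneg_left' : ∀ a b c : R, a ≤ b → 0 ≤ c → c * a ≤ c * b
  directed' : ∀ x : R, ∃ y z : R, 0 ≤ y ∧ 0 ≤ z ∧ x = y - z
  zero_le_one' : (0 : R) ≤ 1

/-- A *partially ordered right module* over a po-ring `R`: an additive abelian group with a
right `R`-action `rsmul` (written on the right, so `rsmul a ξ` is `aξ`), with the usual
right-module axioms, such that addition is translation-invariant and
`0 ≤ a`, `0 ≤ ξ` imply `0 ≤ aξ`. -/
class PORightModule (R : Type*) [PORing R] (A : Type*) [AddCommGroup A] [PartialOrder A] where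
  rsmul : A → R → A
  add_rsmul : ∀ (a b : A) (r : R), rsmul (a + b) r = rsmul a r + rsmul b r
  rsmul_add : ∀ (a : A) (r s : R), rsmul a (r + s) = rsmul a r + rsmul a s
  rsmul_mul : ∀ (a : A) (r s : R), rsmul a (r * s) = rsmul (rsmul a r) s
  rsmul_one : ∀ a : A, rsmul a 1 = a
  add_le_add_right' : ∀ a b : A, a ≤ b → ∀ c : A, a + c ≤ b + c
  rsmul_nonneg : ∀ (a : A) (r : R), 0 ≤ a → 0 ≤ r → 0 ≤ rsmul a r

open PORightModule

/-- A po-ring is a partially ordered right module over itself. -/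
instance PORing.toPORightModule (R : Type*) [PORing R] : PORightModule R R where
  rsmul := (· * ·)
  add_rsmul := add_mul
  rsmul_add := mul_add
  rsmul_mul a r s := (mul_assoc a r s).symm
  rsmul_one := mul_one
  add_le_add_right' := PORing.add_le_add_right'
  rsmul_nonneg a r ha hr := by
    have h := PORing.mul_le_mul_of_nonneg_right' 0 a r ha hr
    simpa using h

/-- Products of partially ordered right modules, ordered coordinatewise. -/
instance Pi.instPORightModule {R : Type*} [PORing R] {ι : Type*} {A : ι → Type*}
    [∀ i, AddCommGroup (A i)] [∀ i, PartialOrder (A i)] [∀ i, PORightModule R (A i)] :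
    PORightModule R (∀ i, A i) where
  rsmul x r i := rsmul (x i) r
  add_rsmul a b r := funext fun i => add_rsmul (a i) (b i) r
  rsmul_add a r s := funext fun i => rsmul_add (a i) r s
  rsmul_mul a r s := funext fun i => rsmul_mul (a i) r s
  rsmul_one a := funext fun i => rsmul_one (a i)
  add_le_add_right' a b h c := by
    intro i
    exact PORightModule.add_le_add_right' R (a i) (b i) (h i) (c i)
  rsmul_nonneg a r ha hr := by
    intro i
    exact PORightModule.rsmul_nonneg (a i) r (ha i) hr

/-- Binary products of partially ordered right modules, ordered coordinatewise. -/
instance Prod.instPORightModule {R : Type*} [PORing R] {A B : Type*}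
    [AddCommGroup A] [PartialOrder A] [PORightModule R A]
    [AddCommGroup B] [PartialOrder B] [PORightModule R B] :
    PORightModule R (A × B) where
  rsmul x r := (rsmul x.1 r, rsmul x.2 r)
  add_rsmul a b r := by
    refine Prod.ext ?_ ?_ <;> simp [PORightModule.add_rsmul]
  rsmul_add a r s := by
    refine Prod.ext ?_ ?_ <;> simp [PORightModule.rsmul_add]
  rsmul_mul a r s := by
    refine Prod.ext ?_ ?_ <;> simp [PORightModule.rsmul_mul]
  rsmul_one a := by
    refine Prod.ext ?_ ?_ <;> simp [PORightModule.rsmul_one]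
  add_le_add_right' a b h c := by
    rw [Prod.le_def] at h ⊢
    constructor
    · simpa using PORightModule.add_le_add_right' R a.1 b.1 h.1 c.1
    · simpa using PORightModule.add_le_add_right' R a.2 b.2 h.2 c.2
  rsmul_nonneg a r ha hr := by
    rw [Prod.le_def] at ha ⊢
    constructor
    · simpa using PORightModule.rsmul_nonneg a.1 r (by simpa using ha.1) hr
    · simpa using PORightModule.rsmul_nonneg a.2 r (by simpa using ha.2) hr

section Defs

variable (R : Type*) [PORing R]

/-- The product `UX = a₁ξ₁ + ⋯ + aₙξₙ` of a row matrix `U = (a₁,…,aₙ)` with entries in `A`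
and a column matrix `X = (ξ₁,…,ξₙ)ᵗ` with entries in `R`. -/
def rowMul {A : Type*} [AddCommGroup A] [PartialOrder A] [PORightModule R A]
    {n : ℕ} (U : Fin n → A) (X : Fin n → R) : A :=
  ∑ i, rsmul (U i) (X i)

/-- A subset `S` of a partially ordered right `R`-module is a *finitely generated
`R⁺`-subsemimodule* if it is the set of all `R⁺`-linear combinations of some finite subset. -/
def IsFGConeIn {A : Type*} [AddCommGroup A] [PartialOrder A] [PORightModule R A]
    (S : Set A) : Prop :=
  ∃ (k : ℕ) (g : Fin k → A),
    S = { a | ∃ Y : Fin k → R, (∀ i, 0 ≤ Y i) ∧ a = rowMul R g Y }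

/-- `A` is *finitely related at* the row matrix `U ∈ M_{1,n}(A)` if the solution set of the
mixed system `UX ≥ 0, X ≥ 0` is a finitely generated `R⁺`-subsemimodule of `M_{n,1}(R)`. -/
def FinitelyRelatedAt {A : Type*} [AddCommGroup A] [PartialOrder A] [PORightModule R A]
    {n : ℕ} (U : Fin n → A) : Prop :=
  IsFGConeIn R {X : Fin n → R | 0 ≤ rowMul R U X ∧ ∀ i, 0 ≤ X i}

/-- `A` is *finitely po-presented at* the row matrix `U ∈ M_{1,n}(A)` if the solution set of
the system `UX ≥ 0` is a finitely generated `R⁺`-subsemimodule of `M_{n,1}(R)`. -/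
def FinitelyPoPresentedAt {A : Type*} [AddCommGroup A] [PartialOrder A] [PORightModule R A]
    {n : ℕ} (U : Fin n → A) : Prop :=
  IsFGConeIn R {X : Fin n → R | 0 ≤ rowMul R U X}

/-- A row matrix `U` is *spanning* if its entries generate `A` as a right `R`-module, i.e.
every element of `A` is an `R`-linear combination `UX` of the entries. -/
def SpanningRow {A : Type*} [AddCommGroup A] [PartialOrder A] [PORightModule R A]
    {n : ℕ} (U : Fin n → A) : Prop :=
  ∀ a : A, ∃ X : Fin n → R, a = rowMul R U X

variable (A : Type*) [AddCommGroup A] [PartialOrder A] [PORightModule R A]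

/-- `A` is *finitely po-presented* if it is finitely po-presented at some spanning row
matrix. -/
def FinitelyPoPresented : Prop :=
  ∃ (n : ℕ) (U : Fin n → A), SpanningRow R U ∧ FinitelyPoPresentedAt R U

/-- `A` is *finitely related* if it is a finitely generated right `R`-module and is finitely
related at every spanning row matrix. -/
def FinitelyRelatedMod : Prop :=
  (∃ (n : ℕ) (U : Fin n → A), SpanningRow R U) ∧
    ∀ (n : ℕ) (U : Fin n → A), SpanningRow R U → FinitelyRelatedAt R U

/-- `A` is *po-coherent* if it is finitely related at every row matrix of elements of `A`. -/
def PoCoherent : Prop :=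
  ∀ (n : ℕ) (U : Fin n → A), FinitelyRelatedAt R U

end Defs

/-- A po-ring is *right po-coherent* if it is po-coherent as a partially ordered right module
over itself. -/
def RightPoCoherent (R : Type*) [PORing R] : Prop :=
  PoCoherent R R

/-- A subset `S` of `A` is a *finitely generated `R`-submodule* if it is the set of all
`R`-linear combinations of some finite subset. -/
def IsFGSubmoduleSet (R : Type*) [PORing R] {A : Type*} [AddCommGroup A] [PartialOrder A]
    [PORightModule R A] (S : Set A) : Prop :=
  ∃ (k : ℕ) (g : Fin k → A), S = { a | ∃ Y : Fin k → R, a = rowMul R g Y }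

/-!
The intersection of the cones generated by `u` and `v` is the image, under `Z ↦ u Z'` with `Z'`
the first block of `Z`, of the cone of solutions of `(u, -v) Z = 0`, `Z ≥ 0`. Po-coherence makes
`{X ≥ 0 | UX ≥ 0}` finitely generated, say by `G`; applying it again to the row `-U G` cuts this
cone down to `{X ≥ 0 | UX = 0}`. For submodules, directedness of `R` makes the submodule spanned
by `u` equal to the cone generated by `(u, -u)`, and a finitely generated cone that is closed under
subtraction is also the submodule spanned by the same generators.
-/

namespace PORightModule

lemma eq_zero_of_nonneg_of_neg_nonneg (R : Type*) [PORing R] {A : Type*} [AddCommGroup A]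
    [PartialOrder A] [PORightModule R A] {a : A} (h : 0 ≤ a) (h' : 0 ≤ -a) : a = 0 := by
  have : 0 + a ≤ -a + a := add_le_add_right' R 0 (-a) h' a
  rw [zero_add, neg_add_cancel] at this
  exact le_antisymm this h

variable {R : Type*} [PORing R] {A : Type*} [AddCommGroup A] [PartialOrder A] [PORightModule R A]

def rsmulAddHom (a : A) : R →+ A := AddMonoidHom.mk' (rsmul a) (rsmul_add a)

def rsmulRightAddHom (r : R) : A →+ A := AddMonoidHom.mk' (rsmul · r) (add_rsmul · · r)

lemma rsmul_sub (a : A) (r s : R) : rsmul a (r - s) = rsmul a r - rsmul a s :=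
  (rsmulAddHom a).map_sub r s

lemma rsmul_sum {ι : Type*} (a : A) (s : Finset ι) (f : ι → R) :
    rsmul a (∑ i ∈ s, f i) = ∑ i ∈ s, rsmul a (f i) :=
  map_sum (rsmulAddHom a) f s

lemma zero_rsmul (r : R) : rsmul (0 : A) r = 0 :=
  (rsmulRightAddHom r).map_zero

lemma neg_rsmul (a : A) (r : R) : rsmul (-a) r = -rsmul a r :=
  (rsmulRightAddHom r).map_neg a

lemma sum_rsmul {ι : Type*} (s : Finset ι) (f : ι → A) (r : R) :
    rsmul (∑ i ∈ s, f i) r = ∑ i ∈ s, rsmul (f i) r :=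
  map_sum (rsmulRightAddHom r) f s

end PORightModule

section RowMul

variable {R : Type*} [PORing R] {A : Type*} [AddCommGroup A] [PartialOrder A] [PORightModule R A]

variable (R) in
def rowCone {n : ℕ} (g : Fin n → A) : Set A :=
  {a | ∃ Y : Fin n → R, (∀ i, 0 ≤ Y i) ∧ a = rowMul R g Y}

variable (R) in
def rowSpan {n : ℕ} (g : Fin n → A) : Set A :=
  {a | ∃ Y : Fin n → R, a = rowMul R g Y}

lemma rowMul_sub_right {n : ℕ} (U : Fin n → A) (X Y : Fin n → R) :
    rowMul R U (X - Y) = rowMul R U X - rowMul R U Y := by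
  simp only [rowMul, Pi.sub_apply, rsmul_sub, Finset.sum_sub_distrib]

lemma rowMul_neg_left {n : ℕ} (U : Fin n → A) (X : Fin n → R) :
    rowMul R (-U) X = -rowMul R U X := by
  simp only [rowMul, Pi.neg_apply, neg_rsmul, Finset.sum_neg_distrib]

lemma rowMul_zero_left {n : ℕ} (X : Fin n → R) : rowMul R (0 : Fin n → A) X = 0 := by
  simp only [rowMul, Pi.zero_apply, zero_rsmul, Finset.sum_const_zero]

lemma rowMul_append {m k : ℕ} (U : Fin m → A) (V : Fin k → A) (X : Fin m → R)
    (Y : Fin k → R) : rowMul R (Fin.append U V) (Fin.append X Y) = rowMul R U X + rowMul R V Y := by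
  simp only [rowMul, Fin.sum_univ_add, Fin.append_left, Fin.append_right]

lemma rowMul_rowMul {m l : ℕ} (u : Fin m → A) (G : Fin l → Fin m → R) (Y : Fin l → R) :
    rowMul R u (rowMul R G Y) = rowMul R (fun t => rowMul R u (G t)) Y := by
  have hG : ∀ i, rowMul R G Y i = ∑ t, G t i * Y t := fun i => Finset.sum_apply i _ _
  calc rowMul R u (rowMul R G Y) = ∑ i, ∑ t, rsmul (rsmul (u i) (G t i)) (Y t) := by
        rw [rowMul]
        simp only [hG, rsmul_sum, rsmul_mul]
    _ = rowMul R (fun t => rowMul R u (G t)) Y := by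
        rw [Finset.sum_comm]
        simp only [rowMul, sum_rsmul]

lemma append_nonneg {m k : ℕ} {X : Fin m → R} {Y : Fin k → R} (hX : ∀ i, 0 ≤ X i)
    (hY : ∀ i, 0 ≤ Y i) (i : Fin (m + k)) : 0 ≤ Fin.append X Y i :=
  Fin.addCases (motive := fun i => 0 ≤ Fin.append X Y i)
    (fun j => by simpa using hX j) (fun j => by simpa using hY j) i

lemma image_rowMul_rowCone {m l : ℕ} (u : Fin m → A) (G : Fin l → Fin m → R) :
    rowMul R u '' rowCone R G = rowCone R (fun t => rowMul R u (G t)) := by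
  ext a
  constructor
  · rintro ⟨_, ⟨Y, hY, rfl⟩, rfl⟩
    exact ⟨Y, hY, rowMul_rowMul u G Y⟩
  · rintro ⟨Y, hY, rfl⟩
    exact ⟨rowMul R G Y, ⟨Y, hY, rfl⟩, rowMul_rowMul u G Y⟩

lemma rowSpan_eq_rowCone_append_neg {m : ℕ} (u : Fin m → A) :
    rowSpan R u = rowCone R (Fin.append u (-u)) := by
  ext a
  constructor
  · rintro ⟨Y, rfl⟩
    choose P Q hP hQ hPQ using fun i => PORing.directed' (Y i)
    refine ⟨Fin.append P Q, append_nonneg hP hQ, ?_⟩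
    rw [rowMul_append, rowMul_neg_left, ← sub_eq_add_neg, ← rowMul_sub_right]
    exact congrArg _ (funext hPQ)
  · rintro ⟨Z, -, rfl⟩
    refine ⟨fun i => Z (Fin.castAdd m i) - Z (Fin.natAdd m i), ?_⟩
    rw [← Fin.append_castAdd_natAdd (f := Z), rowMul_append, rowMul_neg_left,
      ← sub_eq_add_neg, ← rowMul_sub_right]
    simp only [Fin.append_left, Fin.append_right]
    rfl

lemma sub_mem_rowSpan {m : ℕ} {u : Fin m → A} {a b : A} (ha : a ∈ rowSpan R u)
    (hb : b ∈ rowSpan R u) : a - b ∈ rowSpan R u := by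
  obtain ⟨X, rfl⟩ := ha
  obtain ⟨Y, rfl⟩ := hb
  exact ⟨X - Y, (rowMul_sub_right u X Y).symm⟩

lemma isFGSubmoduleSet_of_eq_rowCone {S : Set A} {l : ℕ} {g : Fin l → A}
    (hS : S = rowCone R g) (hsub : ∀ a ∈ S, ∀ b ∈ S, a - b ∈ S) : IsFGSubmoduleSet R S := by
  refine ⟨l, g, Set.Subset.antisymm (fun a ha => ?_) ?_⟩
  · rw [hS] at ha
    obtain ⟨Y, -, rfl⟩ := ha
    exact ⟨Y, rfl⟩
  · rintro _ ⟨Y, rfl⟩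
    choose P Q hP hQ hPQ using fun i => PORing.directed' (Y i)
    rw [show Y = P - Q from funext hPQ, rowMul_sub_right]
    exact hsub _ (hS ▸ ⟨P, hP, rfl⟩) _ (hS ▸ ⟨Q, hQ, rfl⟩)

end RowMul

namespace PoCoherent

variable {R : Type*} [PORing R] {A : Type*} [AddCommGroup A] [PartialOrder A] [PORightModule R A]

lemma isFGConeIn_setOf_mem_rowCone_nonneg (hA : PoCoherent R A) {n k : ℕ}
    (G : Fin k → Fin n → R) (W : Fin n → A) :
    IsFGConeIn R {X | X ∈ rowCone R G ∧ 0 ≤ rowMul R W X} := by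
  obtain ⟨l, F, hF⟩ := hA k (fun t => rowMul R W (G t))
  change _ = rowCone R F at hF
  refine ⟨l, fun s => rowMul R G (F s), ?_⟩
  change _ = rowCone R _
  rw [← image_rowMul_rowCone, ← hF]
  ext X
  constructor
  · rintro ⟨⟨Y, hY, rfl⟩, hW⟩
    exact ⟨Y, ⟨by rwa [← rowMul_rowMul], hY⟩, rfl⟩
  · rintro ⟨Y, ⟨hW, hY⟩, rfl⟩
    exact ⟨⟨Y, hY, rfl⟩, by rwa [rowMul_rowMul]⟩

lemma isFGConeIn_setOf_rowMul_eq_zero (hA : PoCoherent R A) {n : ℕ} (U : Fin n → A) :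
    IsFGConeIn R {X : Fin n → R | rowMul R U X = 0 ∧ ∀ i, 0 ≤ X i} := by
  obtain ⟨k, G, hG⟩ := hA n U
  change _ = rowCone R G at hG
  convert hA.isFGConeIn_setOf_mem_rowCone_nonneg G (-U) using 1
  ext X
  simp only [← hG, Set.mem_ofPred_eq, rowMul_neg_left]
  constructor
  · rintro ⟨hU, hX⟩
    simp [hU, hX]
  · rintro ⟨⟨hU, hX⟩, hU'⟩
    exact ⟨eq_zero_of_nonneg_of_neg_nonneg R hU hU', hX⟩

lemma isFGConeIn_rowCone_inter (hA : PoCoherent R A) {m k : ℕ} (u : Fin m → A)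
    (v : Fin k → A) : IsFGConeIn R (rowCone R u ∩ rowCone R v) := by
  obtain ⟨l, G, hG⟩ := hA.isFGConeIn_setOf_rowMul_eq_zero (Fin.append u (-v))
  change _ = rowCone R G at hG
  refine ⟨l, fun t => rowMul R (Fin.append u 0) (G t), ?_⟩
  change _ = rowCone R _
  rw [← image_rowMul_rowCone, ← hG]
  ext a
  constructor
  · rintro ⟨⟨X, hX, rfl⟩, ⟨Y, hY, hXY⟩⟩
    refine ⟨Fin.append X Y, ⟨?_, append_nonneg hX hY⟩, ?_⟩
    · rw [rowMul_append, rowMul_neg_left, hXY, add_neg_cancel]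
    · rw [rowMul_append, rowMul_zero_left, add_zero]
  · rintro ⟨Z, ⟨hZ, hZ₀⟩, rfl⟩
    rw [← Fin.append_castAdd_natAdd (f := Z)] at hZ hZ₀ ⊢
    rw [rowMul_append, rowMul_neg_left, ← sub_eq_add_neg, sub_eq_zero] at hZ
    rw [rowMul_append, rowMul_zero_left, add_zero]
    exact ⟨⟨_, fun i => by simpa using hZ₀ (Fin.castAdd k i), rfl⟩,
      ⟨_, fun i => by simpa using hZ₀ (Fin.natAdd m i), hZ⟩⟩

end PoCoherent

/-- Let `R` be a po-ring and `A` a po-coherent partially ordered right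
`R`-module.  Then the intersection of any two finitely generated `R`-submodules of `A` is a
finitely generated `R`-submodule, and the intersection of any two finitely generated
`R⁺`-subsemimodules of `A` is a finitely generated `R⁺`-subsemimodule. -/
theorem fg_intersections_of_poCoherent
    (R A : Type*) [PORing R] [AddCommGroup A] [PartialOrder A] [PORightModule R A]
    (h : PoCoherent R A) :
    (∀ S T : Set A, IsFGSubmoduleSet R S → IsFGSubmoduleSet R T →
      IsFGSubmoduleSet R (S ∩ T)) ∧
    (∀ S T : Set A, IsFGConeIn R S → IsFGConeIn R T → IsFGConeIn R (S ∩ T)) := by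
  constructor
  · rintro S T ⟨m, u, rfl⟩ ⟨k, v, rfl⟩
    obtain ⟨l, g, hg⟩ := h.isFGConeIn_rowCone_inter (Fin.append u (-u)) (Fin.append v (-v))
    rw [← rowSpan_eq_rowCone_append_neg, ← rowSpan_eq_rowCone_append_neg] at hg
    exact isFGSubmoduleSet_of_eq_rowCone hg fun a ha b hb =>
      ⟨sub_mem_rowSpan ha.1 hb.1, sub_mem_rowSpan ha.2 hb.2⟩
  · rintro S T ⟨m, u, rfl⟩ ⟨k, v, rfl⟩
    exact h.isFGConeIn_rowCone_inter u v
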